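/- arXiv:1812.10696 — 3 statements merged into one kernel-verified Lean document; each statement's English description precedes it below -/
import Mathlib

section
/- Suppose n ≥ 1 and d ≥ 0 are integers, P is a multilinear polynomial in n variables of total degree at most d over a field F, and S ⊆ F^n is a finite subset with |S| > 2·∑_{i=0}^{⌊d/2⌋} C(n, i). If P(a − b) = 0 for all distinct a, b ∈ S, then P(0) = 0. -/
/-!
Expand `P(a - b) = ∑_s c_s ∏_{i ∈ s} (a_i - b_i)` for the multilinear `P`: every resulting
monomial `∏_{i ∈ T} a_i · ∏_{i ∈ U} (-b_i)` has `|T| + |U| ≤ d`, so `|T| ≤ d/2` or `|U| ≤ d/2`.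
Hence the `S × S` matrix `(P(a - b))` is a sum of rank-one matrices whose left factor lies in the
span of the `∑_{i ≤ d/2} C(n, i)` monomials of degree `≤ d/2` in `a`, or whose right factor lies in
the analogous span in `b`; its rank is at most `2 ∑_{i ≤ d/2} C(n, i)`. By hypothesis the matrix
is `P(0)` times the identity, of rank `|S|` unless `P(0) = 0`.
-/

open Finset MvPolynomial Module

namespace Matrix

variable {m n R : Type*} [Fintype n] [Field R]

theorem rank_add_le (A B : Matrix m n R) : (A + B).rank ≤ A.rank + B.rank := by
  rw [rank, rank, rank, mulVecLin_add]
  exact (Submodule.finrank_mono (LinearMap.range_add_le _ _)).trans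
    (Submodule.finrank_add_le_finrank_add_finrank _ _)

variable [Fintype m]

theorem rank_le_finrank_of_col_mem {A : Matrix m n R} {V : Submodule R (m → R)}
    (hA : ∀ j, A.col j ∈ V) : A.rank ≤ finrank R V := by
  rw [rank_eq_finrank_span_cols]
  exact Submodule.finrank_mono (Submodule.span_le.mpr (Set.range_subset_iff.mpr hA))

theorem rank_le_finrank_of_row_mem {A : Matrix m n R} {W : Submodule R (n → R)}
    (hA : ∀ i, A.row i ∈ W) : A.rank ≤ finrank R W := by
  rw [rank_eq_finrank_span_row]
  exact Submodule.finrank_mono (Submodule.span_le.mpr (Set.range_subset_iff.mpr hA))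

theorem rank_sum_vecMulVec_le {κ : Type*} (s : Finset κ) (u : κ → m → R) (w : κ → n → R)
    (V : Submodule R (m → R)) (W : Submodule R (n → R)) (h : ∀ k ∈ s, u k ∈ V ∨ w k ∈ W) :
    (∑ k ∈ s, vecMulVec (u k) (w k)).rank ≤ finrank R V + finrank R W := by
  classical
  rw [← sum_filter_add_sum_filter_not s (fun k => u k ∈ V)]
  refine (rank_add_le _ _).trans (add_le_add (rank_le_finrank_of_col_mem fun j => ?_)
    (rank_le_finrank_of_row_mem fun i => ?_))
  · have hcol : (∑ k ∈ s with u k ∈ V, vecMulVec (u k) (w k)).col j =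
        ∑ k ∈ s with u k ∈ V, w k j • u k := by
      ext i; simp [col, vecMulVec, Matrix.sum_apply, mul_comm]
    rw [hcol]
    exact Submodule.sum_mem _ fun k hk => Submodule.smul_mem _ _ (mem_filter.mp hk).2
  · have hrow : (∑ k ∈ s with u k ∉ V, vecMulVec (u k) (w k)).row i =
        ∑ k ∈ s with u k ∉ V, u k i • w k := by
      ext j; simp [row, vecMulVec, Matrix.sum_apply]
    rw [hrow]
    refine Submodule.sum_mem _ fun k hk => Submodule.smul_mem _ _ ?_
    obtain ⟨hks, hkV⟩ := mem_filter.mp hk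
    exact (h k hks).resolve_left hkV

end Matrix

theorem Finset.card_filter_card_le_eq_sum_choose {α : Type*} [Fintype α] (k : ℕ) :
    #{T : Finset α | #T ≤ k} = ∑ i ∈ range (k + 1), (Fintype.card α).choose i := by
  rw [card_eq_sum_card_fiberwise (f := card) (t := range (k + 1))
    (fun T hT => by simpa [Nat.lt_succ_iff] using hT)]
  refine sum_congr rfl fun i hi => ?_
  rw [← card_univ, ← card_powersetCard, powersetCard_eq_filter, powerset_univ, filter_filter]
  congr 1
  ext T
  have := mem_range.mp hi
  simp only [mem_filter, mem_univ, true_and]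
  omega

namespace MvPolynomial

variable {σ R : Type*} [CommSemiring R] {P : MvPolynomial σ R}

theorem eval_eq_sum_prod_of_mem_restrictDegree_one (hP : P ∈ restrictDegree σ R 1)
    (x : σ → R) : eval x P = ∑ s ∈ P.support, coeff s P * ∏ i ∈ s.support, x i := by
  rw [eval_eq]
  refine sum_congr rfl fun s hs => congrArg _ (prod_congr rfl fun i hi => ?_)
  have := (mem_restrictDegree _ _ _).mp hP s hs i
  rw [show s i = 1 by rw [Finsupp.mem_support_iff] at hi; omega, pow_one]

theorem card_support_le_totalDegree_of_mem_restrictDegree_one (hP : P ∈ restrictDegree σ R 1)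
    {s : σ →₀ ℕ} (hs : s ∈ P.support) : #s.support ≤ P.totalDegree := by
  refine le_trans (le_of_eq ?_) (le_totalDegree hs)
  rw [Finsupp.sum, card_eq_sum_ones]
  refine sum_congr rfl fun i hi => ?_
  have := (mem_restrictDegree _ _ _).mp hP s hs i
  rw [Finsupp.mem_support_iff] at hi
  omega

theorem rank_of_eval_sub_le {ι F : Type*} [Fintype ι] [Fintype σ] [Field F] (p : ι → σ → F)
    {P : MvPolynomial σ F} (hP : P ∈ restrictDegree σ F 1) {d : ℕ} (hdeg : P.totalDegree ≤ d) :
    (Matrix.of fun a b => eval (p a - p b) P).rank ≤ 2 * #{T : Finset σ | #T ≤ d / 2} := by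
  classical
  set K : Finset (Finset σ) := {T | #T ≤ d / 2}
  let mono : Finset σ → ι → F := fun T a => ∏ i ∈ T, p a i
  let negMono : Finset σ → ι → F := fun U b => ∏ i ∈ U, -p b i
  have expand : Matrix.of (fun a b => eval (p a - p b) P) =
      ∑ x ∈ P.support.sigma fun s => s.support.powerset,
        Matrix.vecMulVec (coeff x.1 P • mono x.2) (negMono (x.1.support \ x.2)) := by
    ext a b
    rw [Matrix.of_apply, eval_eq_sum_prod_of_mem_restrictDegree_one hP, Matrix.sum_apply,
      sum_sigma]
    refine sum_congr rfl fun s _ => ?_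
    simp only [Pi.sub_apply, sub_eq_add_neg, prod_add, mul_sum, Matrix.vecMulVec_apply,
      Pi.smul_apply, smul_eq_mul, mul_assoc, mono, negMono]
  have hspan (f : Finset σ → ι → F) :
      finrank F (Submodule.span F (K.image f : Set (ι → F))) ≤ #K :=
    (finrank_span_finset_le_card _).trans card_image_le
  rw [expand, two_mul]
  refine (Matrix.rank_sum_vecMulVec_le _ _ _ _ _ fun x hx => ?_).trans
    (add_le_add (hspan mono) (hspan negMono))
  obtain ⟨hs, hT⟩ := mem_sigma.mp hx
  by_cases hTcard : #x.2 ≤ d / 2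
  · exact .inl (Submodule.smul_mem _ _
      (Submodule.subset_span (mem_image_of_mem _ (by simpa [K] using hTcard))))
  · refine .inr (Submodule.subset_span (mem_image_of_mem _ ?_))
    have := card_support_le_totalDegree_of_mem_restrictDegree_one hP hs
    have := card_sdiff_of_subset (mem_powerset.mp hT)
    simp only [K, mem_filter, mem_univ, true_and]
    omega

end MvPolynomial

theorem stmt_1_general {F : Type*} [Field F] (n d : ℕ)
    (P : MvPolynomial (Fin n) F)
    (hml : ∀ σ ∈ P.support, ∀ i, σ i ≤ 1)
    (hdeg : P.totalDegree ≤ d)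
    (S : Finset (Fin n → F))
    (hcard : S.card > 2 * ∑ i ∈ Finset.range (d / 2 + 1), n.choose i)
    (hvan : ∀ a ∈ S, ∀ b ∈ S, a ≠ b → MvPolynomial.eval (a - b) P = 0) :
    MvPolynomial.eval (0 : Fin n → F) P = 0 := by
  classical
  by_contra hP0
  have hdiag : Matrix.of (fun a b : S => eval ((a : Fin n → F) - (b : Fin n → F)) P) =
      Matrix.diagonal fun _ => eval 0 P := by
    ext a b
    by_cases hab : a = b
    · simp only [hab, Matrix.of_apply, Matrix.diagonal_apply_eq, sub_self]
    · rw [Matrix.of_apply, Matrix.diagonal_apply_ne _ hab,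
        hvan _ a.2 _ b.2 (Subtype.coe_ne_coe.mpr hab)]
  have hrank := rank_of_eval_sub_le ((↑) : S → Fin n → F)
    ((mem_restrictDegree _ _ _).mpr hml) hdeg
  rw [hdiag, Matrix.rank_diagonal, card_filter_card_le_eq_sum_choose, Fintype.card_fin] at hrank
  simp only [ne_eq, hP0, not_false_eq_true, Fintype.card_subtype_true, Fintype.card_coe] at hrank
  omega

theorem stmt_1 {F : Type*} [Field F] (n d : ℕ) (hn : 1 ≤ n)
    (P : MvPolynomial (Fin n) F)
    (hml : ∀ σ ∈ P.support, ∀ i, σ i ≤ 1)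
    (hdeg : P.totalDegree ≤ d)
    (S : Finset (Fin n → F))
    (hcard : S.card > 2 * ∑ i ∈ Finset.range (d / 2 + 1), n.choose i)
    (hvan : ∀ a ∈ S, ∀ b ∈ S, a ≠ b → MvPolynomial.eval (a - b) P = 0) :
    MvPolynomial.eval (0 : Fin n → F) P = 0 :=
  stmt_1_general n d P hml hdeg S hcard hvan
end

section
/- Let F be a field and let A_1, ..., A_n ⊆ F each have size t > 0. Let S ⊆ A_1 × ... × A_n be a finite subset. Suppose there is a polynomial P in 2n variables (x_1,...,x_n,y_1,...,y_n) over F such that P(a, a) ≠ 0 for every a ∈ S, and P(a, b) = 0 for all distinct a, b ∈ S. Then |S| ≤ 2 · |{(α_1,...,α_n) : 0 ≤ α_i ≤ t−1 for each i, and α_1 + ... + α_n ≤ deg(P)/2}|. -/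
/-!
The matrix `(P(a, b))_{a, b ∈ S}` is diagonal with nonzero diagonal, so its rank is `|S|`.
Every monomial `x^β y^γ` of `P` has `2|β| ≤ deg P` or `2|γ| ≤ deg P`. On the grid `∏ A_i`,
`x_i^k` agrees with the remainder of `X^k` modulo `∏_{a ∈ A_i} (X - a)`, which has degree
`< t` and `≤ k`; so the low-degree side of each monomial is a combination of reduced monomials
`x^α` (`α_i < t`, `2|α| ≤ deg P`). This writes the matrix as a sum of one matrix whose rows and
one whose columns lie in the span of these monomial functions, and its rank is at most twice
their number.
-/

open Finset Polynomial

section GridReduction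

variable {F : Type*} [Field F]

theorem exists_pow_eq_sum_of_card_le {A : Finset F} {t : ℕ} (hA : #A ≤ t) (k : ℕ) :
    ∃ c : Fin t → F, (∀ j : Fin t, k < j → c j = 0) ∧
      ∀ x ∈ A, x ^ k = ∑ j, c j * x ^ (j : ℕ) := by
  set q := (X : F[X]) ^ k %ₘ Lagrange.nodal A id with hq_def
  refine ⟨fun j => q.coeff j, fun j hj => coeff_eq_zero_of_natDegree_lt ?_, fun x hx => ?_⟩
  · exact natDegree_modByMonic_le_left.trans_lt (by rwa [natDegree_X_pow])
  · have hnodal : (Lagrange.nodal A id).natDegree = #A := Lagrange.natDegree_nodal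
    have hq : q.natDegree < t := by
      refine (natDegree_modByMonic_lt _ Lagrange.nodal_monic fun h => ?_).trans_le (hnodal ▸ hA)
      have := card_pos.2 ⟨x, hx⟩
      rw [h, natDegree_one] at hnodal
      omega
    have hroot : q.eval x = x ^ k := by
      have hnode : (Lagrange.nodal A id).eval x = 0 := Lagrange.eval_nodal_at_node (v := id) hx
      rw [hq_def, modByMonic_eq_sub_mul_div, eval_sub, eval_mul, hnode, zero_mul, sub_zero,
        eval_pow, eval_X]
    rw [← hroot, eval_eq_sum_range' hq, ← Fin.sum_univ_eq_sum_range (fun j => q.coeff j * x ^ j)]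

theorem prod_pow_mem_span_of_mem_grid {ι X : Type*} [Fintype ι] [DecidableEq ι]
    {A : ι → Finset F} {t : ℕ} (hA : ∀ i, #(A i) ≤ t)
    {p : X → ι → F} (hp : ∀ x i, p x i ∈ A i) (γ : ι → ℕ) :
    (fun x => ∏ i, p x i ^ γ i) ∈ Submodule.span F
      ((fun (α : ι → Fin t) x => ∏ i, p x i ^ (α i : ℕ)) '' {α | ∀ i, (α i : ℕ) ≤ γ i}) := by
  choose c hc_zero hc_eq using fun i => exists_pow_eq_sum_of_card_le (hA i) (γ i)
  have hexpand : (fun x => ∏ i, p x i ^ γ i) =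
      ∑ α : ι → Fin t, (∏ i, c i (α i)) • fun x => ∏ i, p x i ^ (α i : ℕ) := by
    ext x
    simp only [Finset.sum_apply, Pi.smul_apply, smul_eq_mul, ← prod_mul_distrib]
    rw [prod_congr rfl fun i _ => hc_eq i _ (hp x i), prod_univ_sum, Fintype.piFinset_univ]
  rw [hexpand]
  refine Submodule.sum_mem _ fun α _ => ?_
  by_cases hα : ∀ i, (α i : ℕ) ≤ γ i
  · exact Submodule.smul_mem _ _ (Submodule.subset_span ⟨α, hα, rfl⟩)
  · push Not at hα
    obtain ⟨i, hi⟩ := hα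
    rw [prod_eq_zero (mem_univ i) (hc_zero i _ hi), zero_smul]
    exact Submodule.zero_mem _

variable {ι X : Type*} [Fintype ι]

def lowDegreeSpan (p : X → ι → F) (t d : ℕ) : Submodule F (X → F) :=
  Submodule.span F <| Set.range fun (α : {α : ι → Fin t // 2 * ∑ i, (α i : ℕ) ≤ d}) x =>
    ∏ i, p x i ^ (α.1 i : ℕ)

theorem finrank_lowDegreeSpan_le [DecidableEq ι] (p : X → ι → F) (t d : ℕ) :
    Module.finrank F (lowDegreeSpan p t d) ≤
      #(univ.filter fun α : ι → Fin t => 2 * ∑ i, (α i : ℕ) ≤ d) :=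
  (finrank_range_le_card _).trans (Fintype.card_subtype _).le

theorem prod_pow_mem_lowDegreeSpan [DecidableEq ι] {A : ι → Finset F} {t d : ℕ}
    (hA : ∀ i, #(A i) ≤ t) {p : X → ι → F} (hp : ∀ x i, p x i ∈ A i) {γ : ι → ℕ}
    (hγ : 2 * ∑ i, γ i ≤ d) : (fun x => ∏ i, p x i ^ γ i) ∈ lowDegreeSpan p t d := by
  refine Submodule.span_mono ?_ (prod_pow_mem_span_of_mem_grid hA hp γ)
  rintro _ ⟨α, hα, rfl⟩
  exact ⟨⟨α, le_trans (Nat.mul_le_mul_left 2 (sum_le_sum fun i _ => hα i)) hγ⟩, rfl⟩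

end GridReduction

theorem Matrix.rank_le_of_eq_sum_mul {F X Y κ : Type*} [Field F] [Fintype X] [Fintype Y]
    {M : Matrix X Y F} {s : Finset κ} {u : κ → X → F} {v : κ → Y → F}
    (hM : ∀ x y, M x y = ∑ k ∈ s, u k x * v k y) {V : Submodule F (Y → F)}
    (hv : ∀ k ∈ s, v k ∈ V) : M.rank ≤ Module.finrank F V := by
  have hrow : ∀ x, M.row x ∈ V := by
    intro x
    have : M.row x = ∑ k ∈ s, u k x • v k := by
      ext y
      simp [hM, Finset.sum_apply]
    rw [this]
    exact Submodule.sum_mem _ fun k hk => Submodule.smul_mem _ _ (hv k hk)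
  rw [rank_eq_finrank_span_row]
  exact Submodule.finrank_mono (Submodule.span_le.2 (Set.range_subset_iff.2 hrow))

theorem Matrix.rank_add_le_s2 {R m n : Type*} [Field R] [Fintype m] [Fintype n] (A B : Matrix m n R) :
    (A + B).rank ≤ A.rank + B.rank := by
  rw [Matrix.rank, Matrix.mulVecLin_add]
  exact (Submodule.finrank_mono (LinearMap.range_add_le _ _)).trans
    (Submodule.finrank_add_le_finrank_add_finrank _ _)

namespace MvPolynomial

variable {R ι κ : Type*} [CommSemiring R] [Fintype ι] [Fintype κ]

theorem eval_sumElim (P : MvPolynomial (ι ⊕ κ) R) (a : ι → R) (b : κ → R) :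
    eval (Sum.elim a b) P = ∑ m ∈ P.support,
      P.coeff m * ((∏ i, a i ^ m (.inl i)) * ∏ j, b j ^ m (.inr j)) := by
  rw [eval_eq']
  refine sum_congr rfl fun m _ => ?_
  rw [Fintype.prod_sum_type]
  simp

theorem sum_inl_add_sum_inr_le_totalDegree {P : MvPolynomial (ι ⊕ κ) R} {m : ι ⊕ κ →₀ ℕ}
    (hm : m ∈ P.support) : ∑ i, m (.inl i) + ∑ j, m (.inr j) ≤ P.totalDegree := by
  have := le_totalDegree hm
  rwa [Finsupp.sum_fintype _ _ fun _ => rfl, Fintype.sum_sum_type] at this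

end MvPolynomial

open MvPolynomial in
theorem rank_eval_sumElim_le {F ι X Y : Type*} [Field F] [Fintype ι] [DecidableEq ι]
    [Fintype X] [Fintype Y] {A : ι → Finset F} {t : ℕ} (hA : ∀ i, #(A i) ≤ t)
    {p : X → ι → F} (hp : ∀ x i, p x i ∈ A i) {q : Y → ι → F} (hq : ∀ y i, q y i ∈ A i)
    (P : MvPolynomial (ι ⊕ ι) F) :
    (Matrix.of fun x y => eval (Sum.elim (p x) (q y)) P).rank ≤
      2 * #(univ.filter fun α : ι → Fin t => 2 * ∑ i, (α i : ℕ) ≤ P.totalDegree) := by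
  set d := P.totalDegree
  let term (m : ι ⊕ ι →₀ ℕ) (x : X) (y : Y) : F :=
    P.coeff m * ((∏ i, p x i ^ m (.inl i)) * ∏ i, q y i ^ m (.inr i))
  let low := P.support.filter fun m => 2 * ∑ i, m (.inr i) ≤ d
  let high := P.support.filter fun m => ¬2 * ∑ i, m (.inr i) ≤ d
  let M₁ : Matrix X Y F := .of fun x y => ∑ m ∈ low, term m x y
  let M₂ : Matrix X Y F := .of fun x y => ∑ m ∈ high, term m x y
  have hsplit : Matrix.of (fun x y => eval (Sum.elim (p x) (q y)) P) = M₁ + M₂ := by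
    ext x y
    simp only [M₁, M₂, Matrix.add_apply, Matrix.of_apply, eval_sumElim, term]
    exact (sum_filter_add_sum_filter_not _ _ _).symm
  have h₁ : M₁.rank ≤ Module.finrank F (lowDegreeSpan q t d) :=
    Matrix.rank_le_of_eq_sum_mul (M := M₁) (s := low)
      (u := fun m x => P.coeff m * ∏ i, p x i ^ m (.inl i))
      (v := fun m y => ∏ i, q y i ^ m (.inr i))
      (fun x y => by simp [M₁, term, mul_assoc])
      fun m hm => prod_pow_mem_lowDegreeSpan hA hq (mem_filter.1 hm).2
  have h₂ : M₂.rank ≤ Module.finrank F (lowDegreeSpan p t d) := by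
    rw [← Matrix.rank_transpose]
    refine Matrix.rank_le_of_eq_sum_mul (M := M₂.transpose) (s := high)
      (u := fun m y => P.coeff m * ∏ i, q y i ^ m (.inr i))
      (v := fun m x => ∏ i, p x i ^ m (.inl i))
      (fun y x => sum_congr rfl fun m _ => by ring) fun m hm => prod_pow_mem_lowDegreeSpan hA hp ?_
    have hdeg := sum_inl_add_sum_inr_le_totalDegree (mem_filter.1 hm).1
    have hhigh := (mem_filter.1 hm).2
    omega
  rw [hsplit, two_mul]
  exact (M₁.rank_add_le_s2 M₂).trans (add_le_add (h₁.trans (finrank_lowDegreeSpan_le _ _ _))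
    (h₂.trans (finrank_lowDegreeSpan_le _ _ _)))

open MvPolynomial in
theorem stmt_2_general {F : Type*} [Field F] (n t : ℕ)
    (A : Fin n → Finset F) (hA : ∀ i, (A i).card = t)
    (S : Finset (Fin n → F)) (hS : ∀ a ∈ S, ∀ i, a i ∈ A i)
    (P : MvPolynomial (Fin n ⊕ Fin n) F)
    (hdiag : ∀ a ∈ S, MvPolynomial.eval (Sum.elim a a) P ≠ 0)
    (hoff : ∀ a ∈ S, ∀ b ∈ S, a ≠ b → MvPolynomial.eval (Sum.elim a b) P = 0) :
    S.card ≤ 2 * (Finset.univ.filter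
      (fun α : Fin n → Fin t => 2 * ∑ i, (α i : ℕ) ≤ P.totalDegree)).card := by
  classical
  have hgrid : ∀ (a : S) i, (a : Fin n → F) i ∈ A i := fun a => hS a a.2
  have hdiagonal : (Matrix.of fun a b : S => eval (Sum.elim (a : Fin n → F) b) P) =
      .diagonal fun a => eval (Sum.elim (a : Fin n → F) a) P := by
    ext a b
    rcases eq_or_ne a b with rfl | hab
    · simp
    · rw [Matrix.of_apply, Matrix.diagonal_apply_ne _ hab]
      exact hoff a a.2 b b.2 (Subtype.coe_ne_coe.2 hab)
  have hrank : (Matrix.of fun a b : S => eval (Sum.elim (a : Fin n → F) b) P).rank = #S := by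
    rw [hdiagonal, Matrix.rank_diagonal, ← Fintype.card_coe S]
    exact Fintype.card_congr (Equiv.subtypeUnivEquiv fun a => hdiag a a.2)
  exact hrank ▸ rank_eval_sumElim_le (fun i => (hA i).le) hgrid hgrid P

theorem stmt_2 {F : Type*} [Field F] (n t : ℕ) (ht : 0 < t)
    (A : Fin n → Finset F) (hA : ∀ i, (A i).card = t)
    (S : Finset (Fin n → F)) (hS : ∀ a ∈ S, ∀ i, a i ∈ A i)
    (P : MvPolynomial (Fin n ⊕ Fin n) F)
    (hdiag : ∀ a ∈ S, MvPolynomial.eval (Sum.elim a a) P ≠ 0)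
    (hoff : ∀ a ∈ S, ∀ b ∈ S, a ≠ b → MvPolynomial.eval (Sum.elim a b) P = 0) :
    S.card ≤ 2 * (Finset.univ.filter
      (fun α : Fin n → Fin t => 2 * ∑ i, (α i : ℕ) ≤ P.totalDegree)).card :=
  stmt_2_general n t A hA S hS P hdiag hoff
end

section
/- For any integers q ≥ 2, n ≥ 1, and s ≥ 1, the number of tuples (α_1,...,α_n) ∈ {0,1,...,q−1}^n with α_1 + ... + α_n ≤ s is at most (q · J(q, n(q−1)/s))^n, where J(q, d) := (1/q) inf_{0<x<1} ((1−x^q)/(1−x)) x^{−(q−1)/d}. -/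
noncomputable def J (t : ℕ) (d : ℝ) : ℝ :=
  (1 / t) * sInf {y : ℝ | ∃ x : ℝ, 0 < x ∧ x < 1 ∧
    y = (1 - x ^ t) / (1 - x) * x ^ (-(((t : ℝ) - 1) / d))}

/-!
Markov's inequality for the weight `x ^ (∑ i, α i)` with `0 < x < 1`: every tuple of coordinate
sum at most `s` has weight at least `x ^ s`, and the total weight of all tuples factorises as
`(1 + x + ⋯ + x ^ (q - 1)) ^ n`. Hence the count is at most `x ^ (-s) (1 + ⋯ + x ^ (q - 1)) ^ n`
for every such `x`, and with `d = n (q - 1) / s` this is the `n`-th power of the quantity whose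
infimum defines `q · J(q, d)`.
-/

open Finset

section Counting

variable {R : Type*} [CommSemiring R] {ι : Type*} [Fintype ι] [DecidableEq ι]

theorem geom_sum_pow_card_eq_sum (q : ℕ) (x : R) :
    (∑ j ∈ range q, x ^ j) ^ Fintype.card ι = ∑ α : ι → Fin q, x ^ ∑ i, (α i : ℕ) := by
  rw [← Fin.sum_univ_eq_sum_range, ← card_univ, ← prod_const, Fintype.prod_sum]
  simp only [prod_pow_eq_pow_sum]

variable [PartialOrder R] [IsOrderedRing R]

theorem card_sum_le_mul_pow_le_geom_sum_pow (q s : ℕ) {x : R} (hx0 : 0 ≤ x) (hx1 : x ≤ 1) :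
    #{α : ι → Fin q | ∑ i, (α i : ℕ) ≤ s} * x ^ s ≤
      (∑ j ∈ range q, x ^ j) ^ Fintype.card ι := by
  rw [geom_sum_pow_card_eq_sum, ← nsmul_eq_mul]
  calc #{α : ι → Fin q | ∑ i, (α i : ℕ) ≤ s} • x ^ s
      ≤ ∑ α ∈ {α : ι → Fin q | ∑ i, (α i : ℕ) ≤ s}, x ^ ∑ i, (α i : ℕ) :=
        card_nsmul_le_sum _ _ _ fun α hα ↦ pow_le_pow_of_le_one hx0 hx1 (mem_filter.mp hα).2
    _ ≤ ∑ α : ι → Fin q, x ^ ∑ i, (α i : ℕ) :=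
        sum_le_sum_of_subset_of_nonneg (filter_subset _ _) fun _ _ _ ↦ pow_nonneg hx0 _

end Counting

theorem le_csInf_pow {S : Set ℝ} (hS : S.Nonempty) {C : ℝ} (hC : 0 ≤ C) {n : ℕ} (hn : n ≠ 0)
    (h : ∀ y ∈ S, 0 ≤ y ∧ C ≤ y ^ n) : C ≤ sInf S ^ n := by
  have hroot : (C ^ (n : ℝ)⁻¹) ^ n = C := Real.rpow_inv_natCast_pow hC hn
  have hroot_le : C ^ (n : ℝ)⁻¹ ≤ sInf S := le_csInf hS fun y hy ↦
    (pow_le_pow_iff_left₀ (by positivity) (h y hy).1 hn).mp (hroot.trans_le (h y hy).2)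
  exact hroot.symm.trans_le (pow_le_pow_left₀ (by positivity) hroot_le n)

theorem natCast_mul_J {t : ℕ} (ht : t ≠ 0) (d : ℝ) :
    t * J t d = sInf {y : ℝ | ∃ x : ℝ, 0 < x ∧ x < 1 ∧
      y = (1 - x ^ t) / (1 - x) * x ^ (-(((t : ℝ) - 1) / d))} := by
  rw [J, ← mul_assoc, mul_one_div_cancel (Nat.cast_ne_zero.mpr ht), one_mul]

theorem one_sub_pow_div_one_sub {x : ℝ} (hx : x ≠ 1) (q : ℕ) :
    (1 - x ^ q) / (1 - x) = ∑ j ∈ range q, x ^ j := by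
  rw [geom_sum_eq hx, ← neg_div_neg_eq, neg_sub, neg_sub]

theorem rpow_neg_div_natCast_pow {x : ℝ} (hx : 0 ≤ x) (s : ℕ) {n : ℕ} (hn : n ≠ 0) :
    (x ^ (-((s : ℝ) / n))) ^ n = (x ^ s)⁻¹ := by
  rw [← Real.rpow_mul_natCast hx, neg_mul, div_mul_cancel₀ _ (Nat.cast_ne_zero.mpr hn),
    Real.rpow_neg hx, Real.rpow_natCast]

theorem stmt_18_general (n s q : ℕ) (hq : 2 ≤ q) (hn : 1 ≤ n) :
    ((Finset.univ.filter
        (fun α : Fin n → Fin q => ∑ i, (α i : ℕ) ≤ s)).card : ℝ) ≤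
      ((q : ℝ) * J q ((n : ℝ) * (q - 1) / s)) ^ n := by
  have hq1 : (q : ℝ) - 1 ≠ 0 := sub_ne_zero.mpr (by exact_mod_cast (by omega : q ≠ 1))
  have hexponent : ((q : ℝ) - 1) / ((n : ℝ) * (q - 1) / s) = s / n := by
    rw [div_div_eq_mul_div, mul_comm (n : ℝ), mul_div_mul_left _ _ hq1]
  rw [natCast_mul_J (by omega)]
  refine le_csInf_pow ?_ (by positivity) (by omega) ?_
  · exact ⟨_, 1 / 2, by norm_num, by norm_num, rfl⟩
  rintro y ⟨x, hx0, hx1, rfl⟩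
  rw [one_sub_pow_div_one_sub hx1.ne, hexponent]
  refine ⟨by positivity, ?_⟩
  rw [mul_pow, rpow_neg_div_natCast_pow hx0.le s (by omega), ← div_eq_mul_inv,
    le_div_iff₀ (by positivity)]
  simpa using card_sum_le_mul_pow_le_geom_sum_pow (ι := Fin n) q s hx0.le hx1.le

theorem stmt_18 (n s q : ℕ) (hq : 2 ≤ q) (hn : 1 ≤ n) (hs : 1 ≤ s) :
    ((Finset.univ.filter
        (fun α : Fin n → Fin q => ∑ i, (α i : ℕ) ≤ s)).card : ℝ) ≤
      ((q : ℝ) * J q ((n : ℝ) * (q - 1) / s)) ^ n :=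
  stmt_18_general n s q hq hn
end
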